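/- arXiv:2312.09963 — 5 statements merged into one kernel-verified Lean document; each statement's English description precedes it below -/
import Mathlib

section
/- For every numeric planning problem Π and every complete pattern ≺ (a pattern in which every action of A occurs at least once), the pattern ≺-encoding Π^≺ of Π is complete: if Π has a valid plan, then Π^≺_n is satisfiable for some bound n ≥ 0. -/
open scoped Classical

namespace PatternPlanning

/-! ## Numeric planning problems -/

/-- A linear expression `∑ w, coeff w * w + const` over the numeric variables `VN`. -/
structure LinExpr (VN : Type) where
  coeff : VN → ℚ
  const : ℚ

/-- Value of a linear expression under a numeric valuation. -/
def LinExpr.eval {VN : Type} [Fintype VN] (e : LinExpr VN) (ν : VN → ℚ) : ℚ :=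
  (∑ w, e.coeff w * ν w) + e.const

/-- The comparison operators `≥ , > , =` of numeric conditions `ψ ⊵ 0`. -/
inductive CompOp : Type
  | ge | gt | eq

/-- `op.holds q` means `q ⊵ 0`. -/
def CompOp.holds : CompOp → ℚ → Prop
  | .ge, q => 0 ≤ q
  | .gt, q => 0 < q
  | .eq, q => q = 0

/-- A numeric condition `ψ ⊵ 0`. -/
structure NumCond (VN : Type) where
  expr : LinExpr VN
  op : CompOp

def NumCond.holds {VN : Type} [Fintype VN] (c : NumCond VN) (ν : VN → ℚ) : Prop :=
  c.op.holds (c.expr.eval ν)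

/-- A propositional condition `v = ⊤` or `v = ⊥`. -/
inductive PropCond (VB : Type)
  | isTrue (v : VB)
  | isFalse (v : VB)

def PropCond.holds {VB : Type} : PropCond VB → (VB → Bool) → Prop
  | .isTrue v, β => β v = true
  | .isFalse v, β => β v = false

/-- An action: propositional and numeric preconditions, Boolean effects `v := ⊤/⊥`
and numeric effects `w := ψ` (each variable assigned at most once, enforced by
the functional representation of the effects). -/
structure Act (VB VN : Type) where
  preB : List (PropCond VB)
  preN : List (NumCond VN)
  effB : VB → Option Bool
  effN : VN → Option (LinExpr VN)

def Act.assignsB {VB VN : Type} (a : Act VB VN) (v : VB) : Prop := a.effB v ≠ none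
def Act.assignsN {VB VN : Type} (a : Act VB VN) (x : VN) : Prop := a.effN x ≠ none

/-- The effect `x := e` is a linear increment `x += ψ` : `e = x + ψ` with `ψ` not
containing any variable assigned by `a`. -/
def Act.isIncr {VB VN : Type} (a : Act VB VN) (x : VN) (e : LinExpr VN) : Prop :=
  e.coeff x = 1 ∧ ∀ y, a.assignsN y → y ≠ x → e.coeff y = 0

/-- The increment part `ψ` of a linear increment `x := x + ψ`. -/
noncomputable def incrPart {VN : Type} (e : LinExpr VN) (x : VN) : LinExpr VN :=
  ⟨Function.update e.coeff x 0, e.const⟩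

/-- The (general) assignment `x := e` is simple: `e` contains no variable assigned by `a`. -/
def Act.isSimpleA {VB VN : Type} (a : Act VB VN) (e : LinExpr VN) : Prop :=
  ∀ y, a.assignsN y → e.coeff y = 0

/-- An action is eligible for rolling. -/
def Act.eligible {VB VN : Type} (a : Act VB VN) : Prop :=
  (∀ v, PropCond.isFalse v ∈ a.preB → a.effB v ≠ some true) ∧
  (∀ v, PropCond.isTrue v ∈ a.preB → a.effB v ≠ some false) ∧
  (∀ x e, a.effN x = some e → a.isIncr x e ∨ a.isSimpleA e) ∧
  (∃ x e, a.effN x = some e ∧ a.isIncr x e)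

/-- A state: values of the Boolean and numeric variables. -/
structure PState (VB VN : Type) where
  boolVal : VB → Bool
  numVal : VN → ℚ

/-- `a` is executable in `s`: all preconditions of `a` hold in `s`. -/
def Act.execIn {VB VN : Type} [Fintype VN] (a : Act VB VN) (s : PState VB VN) : Prop :=
  (∀ c ∈ a.preB, c.holds s.boolVal) ∧ (∀ c ∈ a.preN, c.holds s.numVal)

/-- The result of executing `a` in `s`. -/
def Act.result {VB VN : Type} [Fintype VN] (a : Act VB VN) (s : PState VB VN) : PState VB VN where
  boolVal := fun v => (a.effB v).getD (s.boolVal v)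
  numVal := fun x =>
    match a.effN x with
    | none => s.numVal x
    | some e => e.eval s.numVal

/-- Execution of a sequence of actions: `some` of the last induced state if the
sequence is executable, `none` otherwise. -/
noncomputable def execSeq {VB VN A : Type} [Fintype VN] (acts : A → Act VB VN) :
    List A → PState VB VN → Option (PState VB VN)
  | [], s => some s
  | a :: rest, s =>
      if (acts a).execIn s then execSeq acts rest ((acts a).result s) else none

/-- Goal formulas: propositional combinations of propositional and numeric conditions. -/
inductive Formula (VB VN : Type)
  | prop (c : PropCond VB)
  | num (c : NumCond VN)
  | not (f : Formula VB VN)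
  | and (f g : Formula VB VN)
  | or (f g : Formula VB VN)

def Formula.holds {VB VN : Type} [Fintype VN] :
    Formula VB VN → (VB → Bool) → (VN → ℚ) → Prop
  | .prop c, β, _ => c.holds β
  | .num c, _, ν => c.holds ν
  | .not f, β, ν => ¬ f.holds β ν
  | .and f g, β, ν => f.holds β ν ∧ g.holds β ν
  | .or f g, β, ν => f.holds β ν ∨ g.holds β ν

/-- A numeric planning problem `Π = ⟨V_B, V_N, A, I, G⟩` (the sets of variables and
of actions are the types `VB`, `VN`, `A`). -/
structure Problem (VB VN A : Type) where
  acts : A → Act VB VN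
  init : PState VB VN
  goals : List (Formula VB VN)

def Problem.goalSat {VB VN A : Type} [Fintype VN] (P : Problem VB VN A)
    (β : VB → Bool) (ν : VN → ℚ) : Prop :=
  ∀ f ∈ P.goals, f.holds β ν

/-- `α` is a valid plan for `P`. -/
def Problem.isPlan {VB VN A : Type} [Fintype VN] (P : Problem VB VN A) (α : List A) : Prop :=
  ∃ s, execSeq P.acts α P.init = some s ∧ P.goalSat s.boolVal s.numVal

def Problem.hasPlan {VB VN A : Type} [Fintype VN] (P : Problem VB VN A) : Prop :=
  ∃ α, P.isPlan α

/-! ## ψ[a] : rolled substitution -/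

/-- Value of the variable `x` in `ψ[a]` when the action variable of `a` takes value `k`:
`x + (k-1)·ψ₁` for a linear increment `x += ψ₁`, `ψ₁` for a simple assignment `x := ψ₁`,
`x` otherwise. -/
noncomputable def rolledVarVal {VB VN : Type} [Fintype VN] (a : Act VB VN) (k : ℕ)
    (ν : VN → ℚ) (x : VN) : ℚ :=
  match a.effN x with
  | none => ν x
  | some e =>
      if a.isIncr x e then ν x + ((k : ℚ) - 1) * (incrPart e x).eval ν
      else if a.isSimpleA e then e.eval ν
      else ν x

/-- Value of `ψ[a]` under `ν` when the action variable of `a` takes the value `k`. -/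
noncomputable def rolledEval {VB VN : Type} [Fintype VN] (a : Act VB VN) (k : ℕ)
    (ψ : LinExpr VN) (ν : VN → ℚ) : ℚ :=
  (∑ x, ψ.coeff x * rolledVarVal a k ν x) + ψ.const

/-! ## The rolled-up encoding Π^R and the standard encoding Π^S -/

def occursInPre {VB VN : Type} (a : Act VB VN) (x : VN) : Prop :=
  ∃ c ∈ a.preN, c.expr.coeff x ≠ 0

def occursInEff {VB VN : Type} (a : Act VB VN) (x : VN) : Prop :=
  a.assignsN x ∨ ∃ y e, a.effN y = some e ∧ e.coeff x ≠ 0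

/-- Condition under which `mutex^R(A)` contains `a₁ = 0 ∨ a₂ = 0`. -/
def mutexCond {VB VN : Type} (a₁ a₂ : Act VB VN) : Prop :=
  (∃ v, PropCond.isFalse v ∈ a₁.preB ∧ a₂.effB v = some true) ∨
  (∃ v, PropCond.isTrue v ∈ a₁.preB ∧ a₂.effB v = some false) ∨
  (∃ x, a₁.assignsN x ∧ (occursInEff a₂ x ∨ occursInPre a₂ x))

/-- The symbolic transition relation `T^R(X,A,X')` of the rolled-up encoding, as a
predicate on the values `β,ν` for `X`, `u` for the (ℕ-valued) action variables `A`,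
and `β',ν'` for `X'`. -/
def TR {VB VN A : Type} [Fintype VN] (P : Problem VB VN A)
    (β : VB → Bool) (ν : VN → ℚ) (u : A → ℕ) (β' : VB → Bool) (ν' : VN → ℚ) : Prop :=
  -- pre^R(A)
  (∀ a, 0 < u a →
    (∀ v, PropCond.isFalse v ∈ (P.acts a).preB → β v = false) ∧
    (∀ v, PropCond.isTrue v ∈ (P.acts a).preB → β v = true) ∧
    (∀ c ∈ (P.acts a).preN, c.op.holds (c.expr.eval ν))) ∧
  (∀ a, 1 < u a → ∀ c ∈ (P.acts a).preN,
    c.op.holds (rolledEval (P.acts a) (u a) c.expr ν)) ∧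
  -- eff^R(A)
  (∀ a, 0 < u a →
    (∀ v b, (P.acts a).effB v = some b → β' v = b) ∧
    (∀ x e, (P.acts a).effN x = some e →
      ((P.acts a).isIncr x e → ν' x = ν x + (u a : ℚ) * (incrPart e x).eval ν) ∧
      (¬ (P.acts a).isIncr x e → ν' x = e.eval ν))) ∧
  -- frame^R(V_B ∪ V_N)
  (∀ v, (∀ a, (P.acts a).assignsB v → u a = 0) → β' v = β v) ∧
  (∀ x, (∀ a, (P.acts a).assignsN x → u a = 0) → ν' x = ν x) ∧
  -- mutex^R(A)
  (∀ a₁ a₂, a₁ ≠ a₂ → mutexCond (P.acts a₁) (P.acts a₂) → u a₁ = 0 ∨ u a₂ = 0) ∧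
  -- amo^R(A)
  (∀ a, ¬ (P.acts a).eligible → u a ≤ 1)

/-- The symbolic transition relation `T^S` of the standard encoding: `T^R` plus
`a = 0 ∨ a = 1` for every action. -/
def TS {VB VN A : Type} [Fintype VN] (P : Problem VB VN A)
    (β : VB → Bool) (ν : VN → ℚ) (u : A → ℕ) (β' : VB → Bool) (ν' : VN → ℚ) : Prop :=
  TR P β ν u β' ν' ∧ ∀ a, u a ≤ 1

/-- A (candidate) model of `Π^R_n` / `Π^S_n` : values for the `n+1` copies of the state
variables and the `n` copies of the ℕ-valued action variables. -/
structure RModel (VB VN A : Type) (n : ℕ) where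
  β : Fin (n + 1) → VB → Bool
  ν : Fin (n + 1) → VN → ℚ
  u : Fin n → A → ℕ

def RModel.validWith {VB VN A : Type} {n : ℕ} [Fintype VN] (m : RModel VB VN A n)
    (P : Problem VB VN A)
    (T : (VB → Bool) → (VN → ℚ) → (A → ℕ) → (VB → Bool) → (VN → ℚ) → Prop) : Prop :=
  m.β 0 = P.init.boolVal ∧ m.ν 0 = P.init.numVal ∧
  (∀ i : Fin n, T (m.β i.castSucc) (m.ν i.castSucc) (m.u i) (m.β i.succ) (m.ν i.succ)) ∧
  P.goalSat (m.β (Fin.last n)) (m.ν (Fin.last n))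

/-- `m` is a model of `Π^R_n`. -/
def RModel.validR {VB VN A : Type} {n : ℕ} [Fintype VN] (m : RModel VB VN A n)
    (P : Problem VB VN A) : Prop :=
  m.validWith P (TR P)

/-- `m` is a model of `Π^S_n`. -/
def RModel.validS {VB VN A : Type} {n : ℕ} [Fintype VN] (m : RModel VB VN A n)
    (P : Problem VB VN A) : Prop :=
  m.validWith P (TS P)

/-- The decoding of the rolled-up/standard encoding: the sequences in which each
action `a` occurs `u a` times consecutively. -/
def decodesRolled {A : Type} (u : A → ℕ) (α : List A) : Prop :=
  ∃ l : List A, l.Nodup ∧ (∀ a, a ∈ l) ∧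
    α = l.flatMap (fun a => List.replicate (u a) a)

/-- The sequences of actions associated to the model `m` of `Π^R_n`/`Π^S_n`
(the set `(Π^R_n)⁻¹` is the union of `m.plans` over the models `m`). -/
def RModel.plans {VB VN A : Type} {n : ℕ} (m : RModel VB VN A n) (α : List A) : Prop :=
  ∃ αs : Fin n → List A, (∀ i, decodesRolled (m.u i) (αs i)) ∧ α = (List.ofFn αs).flatten

/-- `Π^R_n` is satisfiable. -/
def satR {VB VN A : Type} [Fintype VN] (P : Problem VB VN A) (n : ℕ) : Prop :=
  ∃ m : RModel VB VN A n, m.validR P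

/-- `Π^S_n` is satisfiable. -/
def satS {VB VN A : Type} [Fintype VN] (P : Problem VB VN A) (n : ℕ) : Prop :=
  ∃ m : RModel VB VN A n, m.validS P

/-! ## The R²∃ <-encoding Π^< -/

/-- Value of `v^{≪,·}` after chaining through the actions of `l`:
the last auxiliary variable of an action of `l` assigning `v`, else the initial value. -/
noncomputable def chainB {VB VN A : Type} (acts : A → Act VB VN) (l : List A)
    (β : VB → Bool) (aux : A → VB → Bool) (v : VB) : Bool :=
  l.foldl (fun val b => if ((acts b).effB v).isSome then aux b v else val) (β v)

noncomputable def chainN {VB VN A : Type} (acts : A → Act VB VN) (l : List A)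
    (ν : VN → ℚ) (aux : A → VN → ℚ) (x : VN) : ℚ :=
  l.foldl (fun val b => if ((acts b).effN x).isSome then aux b x else val) (ν x)

/-- The actions strictly preceding `a` in the total order `ord`. -/
noncomputable def before {A : Type} (ord : List A) (a : A) : List A :=
  ord.takeWhile (fun b => decide (b ≠ a))

/-- The symbolic transition relation `T^<(X,A,X')` of the R²∃ `<`-encoding.
`actb` gives the values of the Boolean action variables, `auxB`/`auxN` the values of the
fresh state variables `v^a`. -/
def Tlt {VB VN A : Type} [Fintype VN] (P : Problem VB VN A) (ord : List A)
    (β : VB → Bool) (ν : VN → ℚ) (actb : A → Bool)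
    (auxB : A → VB → Bool) (auxN : A → VN → ℚ)
    (β' : VB → Bool) (ν' : VN → ℚ) : Prop :=
  -- pre^<(A)
  (∀ a, actb a = true →
    (∀ v, PropCond.isFalse v ∈ (P.acts a).preB →
      chainB P.acts (before ord a) β auxB v = false) ∧
    (∀ v, PropCond.isTrue v ∈ (P.acts a).preB →
      chainB P.acts (before ord a) β auxB v = true) ∧
    (∀ c ∈ (P.acts a).preN,
      c.op.holds (c.expr.eval (chainN P.acts (before ord a) ν auxN)))) ∧
  -- eff^<(A)
  (∀ a v b, (P.acts a).effB v = some b →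
    (actb a = true → auxB a v = b) ∧
    (actb a = false → auxB a v = chainB P.acts (before ord a) β auxB v)) ∧
  (∀ a x e, (P.acts a).effN x = some e →
    (actb a = true → auxN a x = e.eval (chainN P.acts (before ord a) ν auxN)) ∧
    (actb a = false → auxN a x = chainN P.acts (before ord a) ν auxN x)) ∧
  -- frame^<(V_B ∪ V_N)
  (∀ v, β' v = chainB P.acts ord β auxB v) ∧
  (∀ x, ν' x = chainN P.acts ord ν auxN x)

/-- A (candidate) model of `Π^<_n`. -/
structure LtModel (VB VN A : Type) (n : ℕ) where
  β : Fin (n + 1) → VB → Bool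
  ν : Fin (n + 1) → VN → ℚ
  actb : Fin n → A → Bool
  auxB : Fin n → A → VB → Bool
  auxN : Fin n → A → VN → ℚ

def LtModel.valid {VB VN A : Type} {n : ℕ} [Fintype VN] (m : LtModel VB VN A n)
    (P : Problem VB VN A) (ord : List A) : Prop :=
  m.β 0 = P.init.boolVal ∧ m.ν 0 = P.init.numVal ∧
  (∀ i : Fin n, Tlt P ord (m.β i.castSucc) (m.ν i.castSucc) (m.actb i)
      (m.auxB i) (m.auxN i) (m.β i.succ) (m.ν i.succ)) ∧
  P.goalSat (m.β (Fin.last n)) (m.ν (Fin.last n))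

/-- The plan decoded from a model of `Π^<_n`: at each step, the actions of `ord`
whose Boolean action variable is true, in the order of `ord`. -/
def LtModel.plan {VB VN A : Type} {n : ℕ} (m : LtModel VB VN A n) (ord : List A) : List A :=
  (List.ofFn fun i : Fin n => ord.filter (m.actb i)).flatten

/-- `Π^<_n` is satisfiable. -/
def satLt {VB VN A : Type} [Fintype VN] (P : Problem VB VN A) (ord : List A) (n : ℕ) : Prop :=
  ∃ m : LtModel VB VN A n, m.valid P ord

/-! ## The pattern ≺-encoding Π^≺ -/

/-- `σ^{≺₁}(v)` for Boolean `v`, where `≺₁` is the prefix of `pat` of length `j`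
(`act j` is the value of the action variable of the `j`-th occurrence in the pattern). -/
noncomputable def sigB {VB VN A : Type} (acts : A → Act VB VN) (pat : List A)
    (act : ℕ → ℕ) (β : VB → Bool) : ℕ → VB → Bool
  | 0 => β
  | j + 1 => fun v =>
      match pat[j]? with
      | none => sigB acts pat act β j v
      | some a =>
          match (acts a).effB v with
          | some true => sigB acts pat act β j v || decide (0 < act j)
          | some false => sigB acts pat act β j v && decide (act j = 0)
          | none => sigB acts pat act β j v

/-- `σ^{≺₁}(x)` for numeric `x` (`aux j` gives the values of the fresh variables
`x^{≺₁;a}` introduced for the general assignments of the `j`-th occurrence). -/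
noncomputable def sigN {VB VN A : Type} [Fintype VN] (acts : A → Act VB VN) (pat : List A)
    (act : ℕ → ℕ) (aux : ℕ → VN → ℚ) (ν : VN → ℚ) : ℕ → VN → ℚ
  | 0 => ν
  | j + 1 => fun x =>
      match pat[j]? with
      | none => sigN acts pat act aux ν j x
      | some a =>
          match (acts a).effN x with
          | none => sigN acts pat act aux ν j x
          | some e =>
              if (acts a).isIncr x e then
                sigN acts pat act aux ν j x +
                  (act j : ℚ) * (incrPart e x).eval (sigN acts pat act aux ν j)
              else aux j x

/-- The symbolic transition relation `T^≺(X,A,X')` of the pattern `≺`-encoding. -/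
def Tpat {VB VN A : Type} [Fintype VN] (P : Problem VB VN A) (pat : List A)
    (β : VB → Bool) (ν : VN → ℚ) (act : ℕ → ℕ) (aux : ℕ → VN → ℚ)
    (β' : VB → Bool) (ν' : VN → ℚ) : Prop :=
  (∀ (j : ℕ) (hj : j < pat.length),
    -- pre^≺(A)
    (∀ v, PropCond.isFalse v ∈ (P.acts (pat.get ⟨j, hj⟩)).preB → 0 < act j →
      sigB P.acts pat act β j v = false) ∧
    (∀ v, PropCond.isTrue v ∈ (P.acts (pat.get ⟨j, hj⟩)).preB → 0 < act j →
      sigB P.acts pat act β j v = true) ∧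
    (∀ c ∈ (P.acts (pat.get ⟨j, hj⟩)).preN,
      (0 < act j → c.op.holds (c.expr.eval (sigN P.acts pat act aux ν j))) ∧
      (1 < act j → c.op.holds
        (rolledEval (P.acts (pat.get ⟨j, hj⟩)) (act j) c.expr (sigN P.acts pat act aux ν j)))) ∧
    -- eff^≺(A) (for the general assignments)
    (∀ x e, (P.acts (pat.get ⟨j, hj⟩)).effN x = some e →
      ¬ (P.acts (pat.get ⟨j, hj⟩)).isIncr x e →
      (act j = 0 → aux j x = sigN P.acts pat act aux ν j x) ∧
      (0 < act j → aux j x = e.eval (sigN P.acts pat act aux ν j))) ∧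
    -- amo^≺(A)
    (¬ (P.acts (pat.get ⟨j, hj⟩)).eligible → act j ≤ 1)) ∧
  -- frame^≺(V_B ∪ V_N)
  (∀ v, β' v = sigB P.acts pat act β pat.length v) ∧
  (∀ x, ν' x = sigN P.acts pat act aux ν pat.length x)

/-- The sequence decoded from the values `act` of the action variables of the pattern:
the `j`-th occurrence repeated `act j` times, in the order of the pattern. -/
def decodePat {A : Type} (pat : List A) (act : ℕ → ℕ) : List A :=
  (List.ofFn fun j : Fin pat.length => List.replicate (act j.val) (pat.get j)).flatten

/-- A (candidate) model of `Π^≺_n`. -/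
structure PatModel (VB VN A : Type) (n : ℕ) where
  β : Fin (n + 1) → VB → Bool
  ν : Fin (n + 1) → VN → ℚ
  act : Fin n → ℕ → ℕ
  aux : Fin n → ℕ → VN → ℚ

def PatModel.valid {VB VN A : Type} {n : ℕ} [Fintype VN] (m : PatModel VB VN A n)
    (P : Problem VB VN A) (pat : List A) : Prop :=
  m.β 0 = P.init.boolVal ∧ m.ν 0 = P.init.numVal ∧
  (∀ i : Fin n, Tpat P pat (m.β i.castSucc) (m.ν i.castSucc) (m.act i) (m.aux i)
      (m.β i.succ) (m.ν i.succ)) ∧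
  P.goalSat (m.β (Fin.last n)) (m.ν (Fin.last n))

/-- The plan decoded from a model of `Π^≺_n`. -/
def PatModel.plan {VB VN A : Type} {n : ℕ} (m : PatModel VB VN A n) (pat : List A) : List A :=
  (List.ofFn fun i : Fin n => decodePat pat (m.act i)).flatten

/-- `Π^≺_n` is satisfiable. -/
def satPat {VB VN A : Type} [Fintype VN] (P : Problem VB VN A) (pat : List A) (n : ℕ) : Prop :=
  ∃ m : PatModel VB VN A n, m.valid P pat

/-! ## Abstract encodings -/

/-- An abstract encoding `Π^E = ⟨X, A, I(X), T(X,A,X'), G(X)⟩` of a problem: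
`XAsgn` is the type of assignments to the state variables `X ⊇ V_B ∪ V_N`
(with projections giving the values of the variables of `V_B ∪ V_N`), `AAsgn` the type
of assignments to the action variables, `T` the symbolic transition relation and
`decode` its decoding function, associating at least one action sequence to each model. -/
structure Encoding (VB VN A : Type) where
  XAsgn : Type
  AAsgn : Type
  projB : XAsgn → VB → Bool
  projN : XAsgn → VN → ℚ
  T : XAsgn → AAsgn → XAsgn → Prop
  decode : XAsgn → AAsgn → XAsgn → List A → Prop
  decode_exists : ∀ x u x', T x u x' → ∃ α, decode x u x' α

def Encoding.stateOf {VB VN A : Type} (E : Encoding VB VN A) (x : E.XAsgn) : PState VB VN :=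
  ⟨E.projB x, E.projN x⟩

/-- The symbolic transition relation of `E` is correct: every action sequence
corresponding to a model of `T` is executable in the state given by the model and
leads to the state given by the primed variables. -/
def Encoding.correctT {VB VN A : Type} [Fintype VN] (E : Encoding VB VN A)
    (P : Problem VB VN A) : Prop :=
  ∀ x u x', E.T x u x' → ∀ α, E.decode x u x' α →
    execSeq P.acts α (E.stateOf x) = some (E.stateOf x')

/-- A (candidate) model of `Π^E_n`. -/
structure EncModel {VB VN A : Type} (E : Encoding VB VN A) (n : ℕ) where
  xs : Fin (n + 1) → E.XAsgn
  us : Fin n → E.AAsgn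

def EncModel.valid {VB VN A : Type} [Fintype VN] {E : Encoding VB VN A} {n : ℕ}
    (m : EncModel E n) (P : Problem VB VN A) : Prop :=
  E.projB (m.xs 0) = P.init.boolVal ∧ E.projN (m.xs 0) = P.init.numVal ∧
  (∀ i : Fin n, E.T (m.xs i.castSucc) (m.us i) (m.xs i.succ)) ∧
  P.goalSat (E.projB (m.xs (Fin.last n))) (E.projN (m.xs (Fin.last n)))

/-- The action sequences associated to a model of `Π^E_n`
(`(Π^E_n)⁻¹` is the union of `m.plans` over the models `m` of `Π^E_n`). -/
def EncModel.plans {VB VN A : Type} {E : Encoding VB VN A} {n : ℕ}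
    (m : EncModel E n) (α : List A) : Prop :=
  ∃ αs : Fin n → List A,
    (∀ i, E.decode (m.xs i.castSucc) (m.us i) (m.xs i.succ) (αs i)) ∧
    α = (List.ofFn αs).flatten

/-- The quantity `Δ` for an action `a` and an expression `ψ`: the sum, over the linear
increments `x += ψ₁` of `a` with `x` occurring in `ψ`, of `ψ₁` weighted by the coefficient
of `x` in `ψ`. -/
noncomputable def deltaVal {VB VN : Type} [Fintype VN] (a : Act VB VN)
    (ψ : LinExpr VN) (ν : VN → ℚ) : ℚ :=
  ∑ x, ψ.coeff x *
    (match a.effN x with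
     | some e => if a.isIncr x e then (incrPart e x).eval ν else 0
     | none => 0)


private lemma eval_incr_eq {VN : Type} [Fintype VN] (e : LinExpr VN) (x : VN)
    (h1 : e.coeff x = 1) (ν : VN → ℚ) :
    e.eval ν = ν x + (incrPart e x).eval ν := by
  unfold LinExpr.eval incrPart
  have h2 : ∀ y, Function.update e.coeff x 0 y * ν y
      = Function.update (fun y => e.coeff y * ν y) x 0 y := by
    intro y
    rcases eq_or_ne y x with rfl | hy
    · simp
    · simp [Function.update_of_ne hy]
  have key : (∑ y, Function.update e.coeff x 0 y * ν y)
      = (∑ y, e.coeff y * ν y) - e.coeff x * ν x := by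
    rw [Finset.sum_congr rfl fun y _ => h2 y,
      Finset.sum_update_of_mem (Finset.mem_univ x)]
    have h3 : (∑ y, e.coeff y * ν y)
        = e.coeff x * ν x + ∑ y ∈ Finset.univ \ {x}, e.coeff y * ν y := by
      rw [Finset.sdiff_singleton_eq_erase]
      exact (Finset.add_sum_erase _ _ (Finset.mem_univ x)).symm
    linarith
  simp only [key, h1]; ring

private lemma tpat_step {VB VN A : Type} [Fintype VN] (P : Problem VB VN A)
    (pat : List A) (a : A) (ha : a ∈ pat) (s : PState VB VN)
    (hexec : (P.acts a).execIn s) :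
    ∃ act aux, Tpat P pat s.boolVal s.numVal act aux
      ((P.acts a).result s).boolVal ((P.acts a).result s).numVal := by
  obtain ⟨⟨j0, hj0⟩, hget⟩ := List.mem_iff_get.mp ha
  set s' := (P.acts a).result s with hs'
  set act : ℕ → ℕ := fun j => if j = j0 then 1 else 0 with hact
  set aux : ℕ → VN → ℚ := fun j x => if j < j0 then s.numVal x else s'.numVal x with haux
  have hpatj0 : pat[j0]? = some a := by
    rw [List.getElem?_eq_getElem hj0]
    exact congrArg some hget
  have hact0 : ∀ j, j ≠ j0 → act j = 0 := by intro j hj; simp [hact, hj]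
  have hact1 : act j0 = 1 := by simp [hact]
  have hNnone : ∀ x, (P.acts a).effN x = none → s'.numVal x = s.numVal x := by
    intro x h; simp [hs', Act.result, h]
  have hNsome : ∀ x e, (P.acts a).effN x = some e → s'.numVal x = e.eval s.numVal := by
    intro x e h; simp [hs', Act.result, h]
  -- characterization of sigB
  have hB : ∀ j v, sigB P.acts pat act s.boolVal j v
      = if j ≤ j0 then s.boolVal v else s'.boolVal v := by
    intro j
    induction j with
    | zero => intro v; simp [sigB]
    | succ j ih =>
      intro v
      have hstep : sigB P.acts pat act s.boolVal (j+1) v =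
          match pat[j]? with
          | none => sigB P.acts pat act s.boolVal j v
          | some b =>
              match (P.acts b).effB v with
              | some true => sigB P.acts pat act s.boolVal j v || decide (0 < act j)
              | some false => sigB P.acts pat act s.boolVal j v && decide (act j = 0)
              | none => sigB P.acts pat act s.boolVal j v := rfl
      by_cases hj : j = j0
      · subst hj
        rw [hstep, hpatj0]
        rw [if_neg (by omega)]
        have hs'v : s'.boolVal v = ((P.acts a).effB v).getD (s.boolVal v) := rfl
        rcases hb : (P.acts a).effB v with _ | b
        · simp only [ih v, if_pos (le_refl j), hs'v, hb, Option.getD_none]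
        · cases b
          · simp [hact1, hs'v, hb]
          · simp [hact1, hs'v, hb]
      · have h0 : act j = 0 := hact0 j hj
        have heq2 : sigB P.acts pat act s.boolVal (j+1) v
            = sigB P.acts pat act s.boolVal j v := by
          rw [hstep]
          rcases hp : pat[j]? with _ | b
          · rfl
          · rcases hb : (P.acts b).effB v with _ | bb
            · simp [hb]
            · cases bb <;> simp [hb, h0]
        rw [heq2, ih v]
        rcases Nat.lt_or_ge j j0 with h | h
        · rw [if_pos (by omega), if_pos (by omega)]
        · rw [if_neg (by omega), if_neg (by omega)]
  -- characterization of sigN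
  have hN : ∀ j x, sigN P.acts pat act aux s.numVal j x
      = if j ≤ j0 then s.numVal x else s'.numVal x := by
    intro j
    induction j with
    | zero => intro x; simp [sigN]
    | succ j ih =>
      intro x
      have hstep : sigN P.acts pat act aux s.numVal (j+1) x =
          match pat[j]? with
          | none => sigN P.acts pat act aux s.numVal j x
          | some b =>
              match (P.acts b).effN x with
              | none => sigN P.acts pat act aux s.numVal j x
              | some e =>
                  if (P.acts b).isIncr x e then
                    sigN P.acts pat act aux s.numVal j x +
                      (act j : ℚ) * (incrPart e x).eval (sigN P.acts pat act aux s.numVal j)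
                  else aux j x := rfl
      by_cases hj : j = j0
      · subst hj
        have hsig0 : sigN P.acts pat act aux s.numVal j = s.numVal := by
          funext y; rw [ih y, if_pos (le_refl j)]
        rw [hstep, hpatj0, if_neg (by omega)]
        rcases hb : (P.acts a).effN x with _ | e
        · simp only [hb]
          rw [hsig0, hNnone x hb]
        · simp only [hb]
          by_cases hincr : (P.acts a).isIncr x e
          · rw [if_pos hincr, hsig0, hact1, hNsome x e hb,
              eval_incr_eq e x hincr.1 s.numVal]
            push_cast
            ring
          · rw [if_neg hincr, hNsome x e hb]
            simp only [haux]
            rw [if_neg (lt_irrefl j), hNsome x e hb]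
      · have h0 : act j = 0 := hact0 j hj
        have hiff : j + 1 ≤ j0 ↔ j ≤ j0 := by omega
        simp only [hiff]
        rw [hstep]
        rcases hp : pat[j]? with _ | b
        · exact ih x
        · simp only
          rcases hb : (P.acts b).effN x with _ | e
          · simp only [hb]; exact ih x
          · simp only [hb]
            by_cases hincr : (P.acts b).isIncr x e
            · rw [if_pos hincr, h0]
              push_cast
              rw [zero_mul, add_zero]
              exact ih x
            · rw [if_neg hincr]
              simp only [haux]
              rcases Nat.lt_or_ge j j0 with h | h
              · rw [if_pos h, if_pos (by omega)]
              · rw [if_neg (by omega), if_neg (by omega)]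
  have hsigB_j0 : sigB P.acts pat act s.boolVal j0 = s.boolVal := by
    funext v; rw [hB j0 v, if_pos (le_refl j0)]
  have hsigN_j0 : sigN P.acts pat act aux s.numVal j0 = s.numVal := by
    funext x; rw [hN j0 x, if_pos (le_refl j0)]
  refine ⟨act, aux, ?_, ?_, ?_⟩
  · intro j hj
    refine ⟨?_, ?_, ?_, ?_, ?_⟩
    · intro v hv hpos
      have hjj0 : j = j0 := by by_contra hne; rw [hact0 j hne] at hpos; omega
      subst hjj0
      have hgeta : pat.get ⟨j, hj⟩ = a := hget
      rw [hsigB_j0]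
      exact (hexec.1 _ (by rw [hgeta] at hv; exact hv) : PropCond.holds (.isFalse v) s.boolVal)
    · intro v hv hpos
      have hjj0 : j = j0 := by by_contra hne; rw [hact0 j hne] at hpos; omega
      subst hjj0
      have hgeta : pat.get ⟨j, hj⟩ = a := hget
      rw [hsigB_j0]
      exact (hexec.1 _ (by rw [hgeta] at hv; exact hv) : PropCond.holds (.isTrue v) s.boolVal)
    · intro c hc
      constructor
      · intro hpos
        have hjj0 : j = j0 := by by_contra hne; rw [hact0 j hne] at hpos; omega
        subst hjj0
        have hgeta : pat.get ⟨j, hj⟩ = a := hget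
        rw [hsigN_j0]
        exact hexec.2 c (by rw [hgeta] at hc; exact hc)
      · intro hpos
        exfalso
        by_cases hne : j = j0
        · rw [hne, hact1] at hpos; omega
        · rw [hact0 j hne] at hpos; omega
    · intro x e he hni
      constructor
      · intro h0
        have hne : j ≠ j0 := by intro hh; rw [hh, hact1] at h0; omega
        rw [haux]
        simp only
        rw [hN j x]
        rcases Nat.lt_or_ge j j0 with h | h
        · rw [if_pos h, if_pos (by omega)]
        · rw [if_neg (by omega), if_neg (by omega)]
      · intro hpos
        have hjj0 : j = j0 := by by_contra hne; rw [hact0 j hne] at hpos; omega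
        subst hjj0
        have hgeta : pat.get ⟨j, hj⟩ = a := hget
        rw [hgeta] at he
        rw [haux]
        simp only
        rw [if_neg (by omega), hsigN_j0]
        exact hNsome x e he
    · intro _
      by_cases hne : j = j0
      · rw [hne, hact1]
      · rw [hact0 j hne]; omega
  · intro v
    rw [hB pat.length v, if_neg (by omega)]
  · intro x
    rw [hN pat.length x, if_neg (by omega)]



private lemma build_model {VB VN A : Type} [Fintype VN] (P : Problem VB VN A)
    (pat : List A) (hcomplete : ∀ a : A, a ∈ pat) :
    ∀ (α : List A) (s t : PState VB VN), execSeq P.acts α s = some t →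
    ∃ (n : ℕ) (β : Fin (n+1) → VB → Bool) (ν : Fin (n+1) → VN → ℚ)
      (act : Fin n → ℕ → ℕ) (aux : Fin n → ℕ → VN → ℚ),
      β 0 = s.boolVal ∧ ν 0 = s.numVal ∧
      β (Fin.last n) = t.boolVal ∧ ν (Fin.last n) = t.numVal ∧
      ∀ i : Fin n, Tpat P pat (β i.castSucc) (ν i.castSucc) (act i) (aux i)
        (β i.succ) (ν i.succ) := by
  intro α
  induction α with
  | nil =>
    intro s t ht
    simp only [execSeq, Option.some.injEq] at ht
    subst ht
    exact ⟨0, fun _ => s.boolVal, fun _ => s.numVal, fun i => i.elim0, fun i => i.elim0,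
      rfl, rfl, rfl, rfl, fun i => i.elim0⟩
  | cons a rest ih =>
    intro s t ht
    rw [execSeq] at ht
    by_cases hex : (P.acts a).execIn s
    · rw [if_pos hex] at ht
      obtain ⟨n, β, ν, act, aux, h0b, h0n, hlb, hln, hT⟩ := ih _ t ht
      obtain ⟨act0, aux0, hT0⟩ := tpat_step P pat a (hcomplete a) s hex
      refine ⟨n+1, Fin.cons s.boolVal β, Fin.cons s.numVal ν,
        Fin.cons act0 act, Fin.cons aux0 aux, ?_, ?_, ?_, ?_, ?_⟩
      · exact Fin.cons_zero _ _
      · exact Fin.cons_zero _ _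
      · rw [← Fin.succ_last, Fin.cons_succ]; exact hlb
      · rw [← Fin.succ_last, Fin.cons_succ]; exact hln
      · intro i
        refine Fin.cases ?_ ?_ i
        · simp only [Fin.castSucc_zero, Fin.cons_zero, Fin.succ_zero_eq_one]
          have h1 : (1 : Fin (n+2)) = (0 : Fin (n+1)).succ := rfl
          rw [h1, Fin.cons_succ, Fin.cons_succ, h0b, h0n]
          exact hT0
        · intro j
          rw [← Fin.succ_castSucc, Fin.cons_succ, Fin.cons_succ, Fin.cons_succ,
            Fin.cons_succ, Fin.cons_succ]
          exact hT j
    · rw [if_neg hex] at ht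
      exact absurd ht (by simp)


/-- for every complete pattern `≺` (every action occurs in it at least
once), the pattern `≺`-encoding `Π^≺` is complete: if `Π` has a valid plan, then
`Π^≺_n` is satisfiable for some bound `n ≥ 0`. -/
theorem pattern_encoding_complete
    {VB VN A : Type} [Fintype VB] [Fintype VN] [Fintype A]
    (P : Problem VB VN A) (pat : List A) (hcomplete : ∀ a : A, a ∈ pat)
    (h : P.hasPlan) :
    ∃ n : ℕ, satPat P pat n := by
  obtain ⟨α, sfin, hrun, hgoal⟩ := h
  obtain ⟨n, β, ν, act, aux, h0b, h0n, hlb, hln, hT⟩ :=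
    build_model P pat hcomplete α P.init sfin hrun
  exact ⟨n, ⟨β, ν, act, aux⟩, h0b, h0n, hT, by show P.goalSat (β (Fin.last n)) (ν (Fin.last n)); rw [hlb, hln]; exact hgoal⟩
end PatternPlanning
end

section
/- For every numeric planning problem Π and every complete pattern ≺ (a pattern in which every action of A occurs at least once), the pattern ≺-encoding Π^≺ dominates the rolled-up encoding Π^R: for every bound n ≥ 0, if Π^R_n is satisfiable then Π^≺_n is satisfiable. -/
open scoped Classical

namespace PatternPlanning

section Proof11

variable {VB VN A : Type} [Fintype VN]

lemma eval_congr' (e : LinExpr VN) {ν₁ ν₂ : VN → ℚ}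
    (h : ∀ x, e.coeff x ≠ 0 → ν₁ x = ν₂ x) : e.eval ν₁ = e.eval ν₂ := by
  unfold LinExpr.eval
  congr 1
  refine Finset.sum_congr rfl fun x _ => ?_
  by_cases hx : e.coeff x = 0
  · simp [hx]
  · rw [h x hx]

lemma incrPart_coeff_ne {e : LinExpr VN} {x y : VN} (h : (incrPart e x).coeff y ≠ 0) :
    y ≠ x ∧ e.coeff y ≠ 0 := by
  by_cases hyx : y = x
  · subst hyx; simp [incrPart] at h
  · refine ⟨hyx, ?_⟩
    simpa [incrPart, Function.update_of_ne hyx] using h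

lemma rolledEval_congr (a : Act VB VN) (k : ℕ) (ψ : LinExpr VN) {ν₁ ν₂ : VN → ℚ}
    (h : ∀ y, occursInEff a y ∨ ψ.coeff y ≠ 0 → ν₁ y = ν₂ y) :
    rolledEval a k ψ ν₁ = rolledEval a k ψ ν₂ := by
  unfold rolledEval
  congr 1
  refine Finset.sum_congr rfl fun x _ => ?_
  by_cases hx : ψ.coeff x = 0
  · simp [hx]
  have hx' : ν₁ x = ν₂ x := h x (Or.inr hx)
  have hev : ∀ e' : LinExpr VN, (∀ y, e'.coeff y ≠ 0 → occursInEff a y) →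
      e'.eval ν₁ = e'.eval ν₂ := fun e' h' => eval_congr' e' fun y hy => h y (Or.inl (h' y hy))
  unfold rolledVarVal
  rcases he : a.effN x with _ | e
  · rw [hx']
  · dsimp only
    by_cases hI : a.isIncr x e
    · rw [if_pos hI, if_pos hI, hx', hev (incrPart e x)
        (fun y hy => Or.inr ⟨x, e, he, (incrPart_coeff_ne hy).2⟩)]
    · rw [if_neg hI, if_neg hI]
      by_cases hS : a.isSimpleA e
      · rw [if_pos hS, if_pos hS, hev e (fun y hy => Or.inr ⟨x, e, he, hy⟩)]
      · rw [if_neg hS, if_neg hS, hx']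

/-- Values of the action variables along the pattern: `u a` at the first occurrence
of `a`, `0` elsewhere. -/
noncomputable def mkAct (u : A → ℕ) (pat : List A) (j : ℕ) : ℕ :=
  match pat[j]? with
  | none => 0
  | some a => if ∀ k < j, pat[k]? ≠ some a then u a else 0

lemma mkAct_pos {u : A → ℕ} {pat : List A} {j : ℕ} (h : 0 < mkAct u pat j) :
    ∃ a, pat[j]? = some a ∧ (∀ k < j, pat[k]? ≠ some a) ∧ mkAct u pat j = u a := by
  rcases hp : pat[j]? with _ | a
  · exfalso; unfold mkAct at h; rw [hp] at h; simp at h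
  · by_cases hf : ∀ k < j, pat[k]? ≠ some a
    · refine ⟨a, rfl, hf, ?_⟩
      unfold mkAct; rw [hp]; exact if_pos hf
    · exfalso; unfold mkAct at h; rw [hp] at h; dsimp only at h
      rw [if_neg hf] at h; omega

lemma mkAct_first {u : A → ℕ} {pat : List A} {a : A} (ha : a ∈ pat) :
    ∃ j, pat[j]? = some a ∧ (∀ k < j, pat[k]? ≠ some a) ∧ mkAct u pat j = u a := by
  have hex : ∃ j : ℕ, pat[j]? = some a := by
    obtain ⟨i, hi, hget⟩ := List.mem_iff_getElem.mp ha
    exact ⟨i, by rw [List.getElem?_eq_getElem hi, hget]⟩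
  refine ⟨Nat.find hex, Nat.find_spec hex, fun k hk => Nat.find_min hex hk, ?_⟩
  unfold mkAct
  rw [Nat.find_spec hex]
  exact if_pos (fun k hk => Nat.find_min hex hk)

/-- The value `σ^{≺₁}(x)` induced by the construction. -/
noncomputable def sFun (acts : A → Act VB VN) (pat : List A)
    (act : ℕ → ℕ) (ν : VN → ℚ) : ℕ → VN → ℚ
  | 0 => ν
  | j + 1 => fun x =>
    match pat[j]? with
    | none => sFun acts pat act ν j x
    | some a =>
      match (acts a).effN x with
      | none => sFun acts pat act ν j x
      | some e =>
        if (acts a).isIncr x e then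
          sFun acts pat act ν j x + (act j : ℚ) * (incrPart e x).eval (sFun acts pat act ν j)
        else if 0 < act j then e.eval (sFun acts pat act ν j)
        else sFun acts pat act ν j x

/-- Values of the auxiliary variables. -/
noncomputable def mkAux (acts : A → Act VB VN) (pat : List A)
    (act : ℕ → ℕ) (ν : VN → ℚ) (j : ℕ) (x : VN) : ℚ :=
  match pat[j]? with
  | none => sFun acts pat act ν j x
  | some a =>
    match (acts a).effN x with
    | none => sFun acts pat act ν j x
    | some e =>
      if 0 < act j ∧ ¬ (acts a).isIncr x e then e.eval (sFun acts pat act ν j)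
      else sFun acts pat act ν j x

lemma sigN_eq (acts : A → Act VB VN) (pat : List A) (act : ℕ → ℕ) (ν : VN → ℚ) :
    ∀ j, sigN acts pat act (mkAux acts pat act ν) ν j = sFun acts pat act ν j
  | 0 => rfl
  | j + 1 => by
    have IH := sigN_eq acts pat act ν j
    funext x
    simp only [sigN, sFun, IH]
    rcases hp : pat[j]? with _ | a
    · rfl
    · rcases he : (acts a).effN x with _ | e
      · simp only [he]
      · simp only [he]
        by_cases hI : (acts a).isIncr x e
        · simp [hI]
        · simp only [if_neg hI, mkAux, hp, he]
          by_cases hj : 0 < act j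
          · rw [if_pos ⟨hj, hI⟩, if_pos hj]
          · rw [if_neg (by tauto), if_neg hj]


lemma sFun_frozen (acts : A → Act VB VN) (pat : List A) (act : ℕ → ℕ) (ν : VN → ℚ)
    (x : VN) (m : ℕ) :
    ∀ j, m ≤ j →
      (∀ k, m ≤ k → k < j → ∀ a, pat[k]? = some a → 0 < act k → (acts a).effN x = none) →
      sFun acts pat act ν j x = sFun acts pat act ν m x
  | 0, hm, _ => by
    have : m = 0 := Nat.le_zero.mp hm
    rw [this]
  | j + 1, hm, hfr => by
    rcases Nat.eq_or_lt_of_le hm with h | h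
    · rw [h]
    · have hm' : m ≤ j := Nat.lt_succ_iff.mp h
      have IH := sFun_frozen acts pat act ν x m j hm'
        (fun k hk1 hk2 => hfr k hk1 (Nat.lt_succ_of_lt hk2))
      simp only [sFun]
      rcases hp : pat[j]? with _ | a
      · exact IH
      · simp only
        rcases he : (acts a).effN x with _ | e
        · exact IH
        · simp only
          have hz : act j = 0 := by
            by_contra h0
            have := hfr j hm' (Nat.lt_succ_self j) a hp (Nat.pos_of_ne_zero h0)
            rw [this] at he; cases he
          by_cases hI : (acts a).isIncr x e
          · rw [if_pos hI, hz]
            simp [IH]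
          · rw [if_neg hI, if_neg (by omega), IH]

lemma sigB_inv (acts : A → Act VB VN) (pat : List A) (act : ℕ → ℕ) (β : VB → Bool)
    {v : VB} {c : Bool} (hβ : β v = c) :
    ∀ j, (∀ k, k < j → ∀ a, pat[k]? = some a → 0 < act k →
        ∀ bv, (acts a).effB v = some bv → bv = c) →
      sigB acts pat act β j v = c
  | 0, _ => hβ
  | j + 1, hstep => by
    have IH := sigB_inv acts pat act β hβ j (fun k hk => hstep k (Nat.lt_succ_of_lt hk))
    simp only [sigB]
    rcases hp : pat[j]? with _ | a
    · exact IH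
    · simp only
      rcases he : (acts a).effB v with _ | bv
      · exact IH
      · cases bv
        · simp only
          by_cases hj : 0 < act j
          · have hc : false = c := hstep j (Nat.lt_succ_self j) a hp hj false he
            have : act j ≠ 0 := by omega
            simp [this, ← hc]
          · have hz : act j = 0 := by omega
            simp [hz, IH]
        · simp only
          by_cases hj : 0 < act j
          · have hc : true = c := hstep j (Nat.lt_succ_self j) a hp hj true he
            simp [hj, ← hc]
          · have hz : act j = 0 := by omega
            simp [hz, IH]

lemma sigB_track (acts : A → Act VB VN) (pat : List A) (act : ℕ → ℕ) (β : VB → Bool)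
    {v : VB} {c : Bool}
    (hstep : ∀ k, ∀ a, pat[k]? = some a → 0 < act k →
        ∀ bv, (acts a).effB v = some bv → bv = c) :
    ∀ j, (∃ k, k < j ∧ ∃ a bv, pat[k]? = some a ∧ 0 < act k ∧ (acts a).effB v = some bv) →
      sigB acts pat act β j v = c
  | 0, h => absurd h (by simp)
  | j + 1, ⟨k, hk, a, bv, hpa, hka, hbe⟩ => by
    simp only [sigB]
    rcases Nat.lt_succ_iff_lt_or_eq.mp hk with hk' | rfl
    · have IH := sigB_track acts pat act β hstep j ⟨k, hk', a, bv, hpa, hka, hbe⟩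
      rcases hp : pat[j]? with _ | b
      · exact IH
      · simp only
        rcases he : (acts b).effB v with _ | bv'
        · exact IH
        · by_cases hj : 0 < act j
          · have hc := hstep j b hp hj bv' he
            cases bv'
            · have : act j ≠ 0 := by omega
              simp [this, ← hc]
            · simp [hj, ← hc]
          · have hz : act j = 0 := by omega
            cases bv' <;> simp [hz, IH]
    · rw [hpa]
      have hc := hstep k a hpa hka bv hbe
      have hne : act k ≠ 0 := by omega
      cases bv
      · simp [hbe, hne, ← hc]
      · simp [hbe, hka, ← hc]


lemma mkAct_pos' {u : A → ℕ} {pat : List A} {j : ℕ} {a : A}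
    (hpa : pat[j]? = some a) (h : 0 < mkAct u pat j) :
    (∀ k < j, pat[k]? ≠ some a) ∧ mkAct u pat j = u a := by
  obtain ⟨a', hpa', hfa, hua⟩ := mkAct_pos h
  rw [hpa] at hpa'
  obtain rfl : a = a' := by injection hpa'
  exact ⟨hfa, hua⟩

lemma step_sim (P : Problem VB VN A) (pat : List A) (hcomplete : ∀ a : A, a ∈ pat)
    {β : VB → Bool} {ν : VN → ℚ} {u : A → ℕ} {β' : VB → Bool} {ν' : VN → ℚ}
    (hT : TR P β ν u β' ν') :
    Tpat P pat β ν (mkAct u pat) (mkAux P.acts pat (mkAct u pat) ν) β' ν' := by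
  obtain ⟨hpre1, hpre2, heff, hfrB, hfrN, hmux, hamo⟩ := hT
  have hnomux : ∀ {j k : ℕ} {a b : A}, j ≠ k → 0 < mkAct u pat j → 0 < mkAct u pat k →
      pat[j]? = some a → pat[k]? = some b → ¬ mutexCond (P.acts a) (P.acts b) := by
    intro j k a b hne hj hk hpa hpb hm
    obtain ⟨hfa, hua⟩ := mkAct_pos' hpa hj
    obtain ⟨hfb, hub⟩ := mkAct_pos' hpb hk
    have hab : a ≠ b := by
      rintro rfl
      rcases Nat.lt_or_ge j k with h | h
      · exact hfb j h hpa
      · have : k < j := by omega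
        exact hfa k this hpb
    rcases hmux a b hab hm with h | h
    · rw [hua, h] at hj; omega
    · rw [hub, h] at hk; omega
  have hactval : ∀ {j : ℕ} {a : A}, pat[j]? = some a → 0 < mkAct u pat j →
      mkAct u pat j = u a ∧ 0 < u a := by
    intro j a hpa hj
    obtain ⟨_, hua⟩ := mkAct_pos' hpa hj
    rw [hua] at hj
    exact ⟨hua, hj⟩
  have hrel : ∀ {j : ℕ} {a : A}, 0 < mkAct u pat j → pat[j]? = some a →
      ∀ y, occursInEff (P.acts a) y ∨ occursInPre (P.acts a) y →
      sFun P.acts pat (mkAct u pat) ν j y = ν y := by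
    intro j a hj hpa y hy
    refine sFun_frozen P.acts pat (mkAct u pat) ν y 0 j (Nat.zero_le _) ?_
    intro k _ hk b hpb hbk
    by_contra hne
    exact hnomux (Nat.ne_of_lt hk) hbk hj hpb hpa (Or.inr (Or.inr ⟨y, hne, hy⟩))
  refine ⟨?_, ?_, ?_⟩
  · intro j hj
    have hpa : pat[j]? = some (pat.get ⟨j, hj⟩) := by
      rw [List.get_eq_getElem, List.getElem?_eq_getElem hj]
    set a := pat.get ⟨j, hj⟩ with ha
    refine ⟨?_, ?_, ?_, ?_, ?_⟩
    · -- propositional preconditions v = ⊥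
      intro v hmem hpos
      obtain ⟨hua, hupos⟩ := hactval hpa hpos
      refine sigB_inv P.acts pat _ β ((hpre1 a hupos).1 v hmem) j ?_
      intro k hk b hpb hbk bv hbe
      cases bv
      · rfl
      · exact absurd (Or.inl ⟨v, hmem, hbe⟩)
          (hnomux (Nat.ne_of_lt hk).symm hpos hbk hpa hpb)
    · -- propositional preconditions v = ⊤
      intro v hmem hpos
      obtain ⟨hua, hupos⟩ := hactval hpa hpos
      refine sigB_inv P.acts pat _ β ((hpre1 a hupos).2.1 v hmem) j ?_
      intro k hk b hpb hbk bv hbe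
      cases bv
      · exact absurd (Or.inr (Or.inl ⟨v, hmem, hbe⟩))
          (hnomux (Nat.ne_of_lt hk).symm hpos hbk hpa hpb)
      · rfl
    · -- numeric preconditions
      intro c hc
      constructor
      · intro hpos
        obtain ⟨hua, hupos⟩ := hactval hpa hpos
        have hev : c.expr.eval
            (sigN P.acts pat (mkAct u pat) (mkAux P.acts pat (mkAct u pat) ν) ν j)
            = c.expr.eval ν := by
          rw [sigN_eq]
          exact eval_congr' _ fun y hy => hrel hpos hpa y (Or.inr ⟨c, hc, hy⟩)
        rw [hev]
        exact (hpre1 a hupos).2.2 c hc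
      · intro hpos1
        have hpos : 0 < mkAct u pat j := by omega
        obtain ⟨hua, hupos⟩ := hactval hpa hpos
        have hev : rolledEval (P.acts a) (mkAct u pat j) c.expr
            (sigN P.acts pat (mkAct u pat) (mkAux P.acts pat (mkAct u pat) ν) ν j)
            = rolledEval (P.acts a) (u a) c.expr ν := by
          rw [sigN_eq, hua]
          exact rolledEval_congr _ _ _ fun y hy =>
            hrel hpos hpa y (hy.elim Or.inl fun h2 => Or.inr ⟨c, hc, h2⟩)
        rw [hev]
        exact hpre2 a (by omega) c hc
    · -- effects on the auxiliary variables
      intro x e hbe hnI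
      constructor
      · intro hz
        rw [sigN_eq]
        unfold mkAux
        rw [hpa]; dsimp only; rw [hbe]; dsimp only
        rw [if_neg (by rintro ⟨h1, -⟩; omega)]
      · intro hpos
        rw [sigN_eq]
        unfold mkAux
        rw [hpa]; dsimp only; rw [hbe]; dsimp only
        rw [if_pos ⟨hpos, hnI⟩]
    · -- at-most-once
      intro hnel
      by_cases hz : mkAct u pat j = 0
      · omega
      · have hpos : 0 < mkAct u pat j := Nat.pos_of_ne_zero hz
        obtain ⟨hua, _⟩ := hactval hpa hpos
        rw [hua]
        exact hamo a hnel
  · -- Boolean frame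
    intro v
    by_cases hA : ∀ b, (P.acts b).assignsB v → u b = 0
    · rw [hfrB v hA]
      refine (sigB_inv P.acts pat _ β rfl pat.length ?_).symm
      intro k hk b hpb hbk bv hbe
      exfalso
      obtain ⟨hub, hupos⟩ := hactval hpb hbk
      have := hA b (by simp [Act.assignsB, hbe])
      omega
    · push_neg at hA
      obtain ⟨b, hass, hub⟩ := hA
      rcases hbe : (P.acts b).effB v with _ | bv
      · exact absurd hbe hass
      have hupos : 0 < u b := Nat.pos_of_ne_zero hub
      obtain ⟨j, hpj, hfst, hactj⟩ := mkAct_first (u := u) (hcomplete b)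
      have hjlen : j < pat.length := by
        by_contra hle
        rw [List.getElem?_eq_none (by omega)] at hpj
        cases hpj
      refine (sigB_track P.acts pat _ β (c := β' v) ?_ pat.length
        ⟨j, hjlen, b, bv, hpj, by rw [hactj]; exact hupos, hbe⟩).symm
      intro k b₂ hpb₂ hbk bv₂ hbe₂
      obtain ⟨_, hupos₂⟩ := hactval hpb₂ hbk
      exact ((heff b₂ hupos₂).1 v bv₂ hbe₂).symm
  · -- numeric frame
    intro x
    rw [sigN_eq]
    by_cases hA : ∀ b, (P.acts b).assignsN x → u b = 0
    · rw [hfrN x hA]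
      refine (sFun_frozen P.acts pat _ ν x 0 pat.length (Nat.zero_le _) ?_).symm
      intro k _ hk b hpb hbk
      by_contra hne
      obtain ⟨hub, hupos⟩ := hactval hpb hbk
      have := hA b hne
      omega
    · push_neg at hA
      obtain ⟨b, hass, hub⟩ := hA
      rcases hbe : (P.acts b).effN x with _ | e
      · exact absurd hbe hass
      have hupos : 0 < u b := Nat.pos_of_ne_zero hub
      obtain ⟨j, hpj, hfst, hactj⟩ := mkAct_first (u := u) (hcomplete b)
      have hjpos : 0 < mkAct u pat j := by rw [hactj]; exact hupos
      have hjlen : j < pat.length := by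
        by_contra hle
        rw [List.getElem?_eq_none (by omega)] at hpj
        cases hpj
      have huniq : ∀ k, k ≠ j → ∀ b₂, pat[k]? = some b₂ → 0 < mkAct u pat k →
          (P.acts b₂).effN x = none := by
        intro k hkj b₂ hpb₂ hbk
        by_contra hne
        exact hnomux hkj.symm hjpos hbk hpj hpb₂
          (Or.inr (Or.inr ⟨x, hass, Or.inl (Or.inl hne)⟩))
      have h1 : sFun P.acts pat (mkAct u pat) ν pat.length x
          = sFun P.acts pat (mkAct u pat) ν (j + 1) x :=
        sFun_frozen P.acts pat _ ν x (j + 1) pat.length (Nat.succ_le_of_lt hjlen)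
          (fun k hk1 hk2 b₂ hpb₂ hbk => huniq k (by omega) b₂ hpb₂ hbk)
      have h0 : sFun P.acts pat (mkAct u pat) ν j x = ν x :=
        sFun_frozen P.acts pat _ ν x 0 j (Nat.zero_le _)
          (fun k _ hk b₂ hpb₂ hbk => huniq k (by omega) b₂ hpb₂ hbk)
      have hsucc : sFun P.acts pat (mkAct u pat) ν (j + 1) x
          = if (P.acts b).isIncr x e then ν x + (u b : ℚ) * (incrPart e x).eval ν
            else e.eval ν := by
        simp only [sFun]
        rw [hpj]; dsimp only; rw [hbe]; dsimp only
        by_cases hI : (P.acts b).isIncr x e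
        · rw [if_pos hI, if_pos hI, h0, hactj]
          have hev : (incrPart e x).eval (sFun P.acts pat (mkAct u pat) ν j)
              = (incrPart e x).eval ν :=
            eval_congr' _ fun y hy => hrel hjpos hpj y
              (Or.inl (Or.inr ⟨x, e, hbe, (incrPart_coeff_ne hy).2⟩))
          rw [hev]
        · rw [if_neg hI, if_neg hI, if_pos hjpos]
          exact eval_congr' _ fun y hy => hrel hjpos hpj y (Or.inl (Or.inr ⟨x, e, hbe, hy⟩))
      rw [h1, hsucc]
      by_cases hI : (P.acts b).isIncr x e
      · rw [if_pos hI]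
        exact ((heff b hupos).2 x e hbe).1 hI
      · rw [if_neg hI]
        exact ((heff b hupos).2 x e hbe).2 hI

end Proof11

/-- for every complete pattern `≺`, the pattern `≺`-encoding `Π^≺`
dominates the rolled-up encoding `Π^R`: for every bound `n`, if `Π^R_n` is satisfiable
then `Π^≺_n` is satisfiable. -/
theorem pattern_dominates_rolledup
    {VB VN A : Type} [Fintype VB] [Fintype VN] [Fintype A]
    (P : Problem VB VN A) (pat : List A) (hcomplete : ∀ a : A, a ∈ pat)
    (n : ℕ) (h : satR P n) :
    satPat P pat n := by
  obtain ⟨m, hm0, hm1, hmT, hmG⟩ := h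
  exact ⟨⟨m.β, m.ν, fun i => mkAct (m.u i) pat,
      fun i => mkAux P.acts pat (mkAct (m.u i) pat) (m.ν i.castSucc)⟩,
    hm0, hm1, fun i => step_sim P pat hcomplete (hmT i), hmG⟩
end PatternPlanning
end

section
/- For every numeric planning problem Π, every pattern ≺ and every total order < of the actions of Π that is compatible with ≺ (i.e., <, seen as a sequence of actions, can be obtained from ≺ by removing zero or more actions), the pattern ≺-encoding Π^≺ dominates the R²∃ <-encoding Π^<: for every bound n ≥ 0, if Π^<_n is satisfiable then Π^≺_n is satisfiable. -/
/-!
Embed `<` into `≺` by an order embedding `f` of positions, and read a model of `T^≺` off a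
model of `T^<` with the same states: the occurrence `f k` of `ord[k]` is executed once iff
`ord[k]` is, every other occurrence is idle, and the fresh variable of an occurrence takes the
R²∃ value reached just after it. Along the pattern, `σ^{≺₁}` then agrees with the chained values
`x^{≪,·}` over the actions of `<` whose occurrences lie in `≺₁`, because both advance by applying
an action when it fires and stay put otherwise. Preconditions, effects and frame of `T^≺` are
therefore those of `T^<`, and the rolled and at-most-one constraints hold since every action
variable is `0` or `1`.
-/

open scoped Classical

namespace PatternPlanning

attribute [ext] PState

section Chain

variable {VB VN A : Type}

@[simp]
lemma chainB_append_singleton (acts : A → Act VB VN) (l : List A) (a : A) (β : VB → Bool)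
    (aux : A → VB → Bool) (v : VB) :
    chainB acts (l ++ [a]) β aux v =
      if ((acts a).effB v).isSome then aux a v else chainB acts l β aux v := by
  simp [chainB]

@[simp]
lemma chainN_append_singleton (acts : A → Act VB VN) (l : List A) (a : A) (ν : VN → ℚ)
    (aux : A → VN → ℚ) (x : VN) :
    chainN acts (l ++ [a]) ν aux x =
      if ((acts a).effN x).isSome then aux a x else chainN acts l ν aux x := by
  simp [chainN]

lemma before_append_cons {l₁ l₂ : List A} {a : A} (h : a ∉ l₁) :
    before (l₁ ++ a :: l₂) a = l₁ := by
  rw [before, List.takeWhile_append_of_pos (by simpa using fun b hb => ne_of_mem_of_not_mem hb h),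
    List.takeWhile_cons_of_neg (by simp), List.append_nil]

lemma before_getElem_eq_take {ord : List A} (hnd : ord.Nodup) (k : ℕ) (hk : k < ord.length) :
    before ord ord[k] = ord.take k := by
  have hsplit : ord = ord.take k ++ ord[k] :: ord.drop (k + 1) := by simp
  have hnotMem : ord[k] ∉ ord.take k := fun hm =>
    List.disjoint_of_nodup_append (hsplit ▸ hnd) hm List.mem_cons_self
  calc before ord ord[k] = before (ord.take k ++ ord[k] :: ord.drop (k + 1)) ord[k] :=
        congrArg (before · ord[k]) hsplit
    _ = ord.take k := before_append_cons hnotMem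

noncomputable def chainState (acts : A → Act VB VN) (l : List A) (s : PState VB VN)
    (auxB : A → VB → Bool) (auxN : A → VN → ℚ) : PState VB VN :=
  ⟨chainB acts l s.boolVal auxB, chainN acts l s.numVal auxN⟩

end Chain

section Step

variable {VB VN A : Type} [Fintype VN]

def Act.resultIf (a : Act VB VN) (fires : Bool) (s : PState VB VN) : PState VB VN :=
  if fires then a.result s else s

lemma Tlt.chainState_before_append {P : Problem VB VN A} {ord : List A} {β : VB → Bool}
    {ν : VN → ℚ} {actb : A → Bool} {auxB : A → VB → Bool} {auxN : A → VN → ℚ}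
    {β' : VB → Bool} {ν' : VN → ℚ} (hT : Tlt P ord β ν actb auxB auxN β' ν') (a : A) :
    chainState P.acts (before ord a ++ [a]) ⟨β, ν⟩ auxB auxN =
      (P.acts a).resultIf (actb a) (chainState P.acts (before ord a) ⟨β, ν⟩ auxB auxN) := by
  obtain ⟨-, heffB, heffN, -, -⟩ := hT
  ext1
  · funext v
    rcases hv : (P.acts a).effB v with _ | b
    · cases actb a <;> simp [chainState, Act.resultIf, Act.result, hv]
    · cases ha : actb a <;> simp [chainState, Act.resultIf, Act.result, hv, ha, heffB a v b hv]
  · funext x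
    rcases hx : (P.acts a).effN x with _ | e
    · cases actb a <;> simp [chainState, Act.resultIf, Act.result, hx]
    · cases ha : actb a <;> simp [chainState, Act.resultIf, Act.result, hx, ha, heffN a x e hx]

lemma LinExpr.eval_eq_add_incrPart (e : LinExpr VN) {x : VN} (hx : e.coeff x = 1)
    (ν : VN → ℚ) : e.eval ν = ν x + (incrPart e x).eval ν := by
  simp only [LinExpr.eval, incrPart, ← Finset.add_sum_erase _ _ (Finset.mem_univ x),
    Function.update_self, hx]
  have hrest : ∑ w ∈ Finset.univ.erase x, Function.update e.coeff x 0 w * ν w =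
      ∑ w ∈ Finset.univ.erase x, e.coeff w * ν w :=
    Finset.sum_congr rfl fun w hw => by rw [Function.update_of_ne (Finset.ne_of_mem_erase hw)]
  rw [hrest]
  ring

noncomputable def sigState (acts : A → Act VB VN) (pat : List A) (act : ℕ → ℕ)
    (aux : ℕ → VN → ℚ) (s : PState VB VN) (j : ℕ) : PState VB VN :=
  ⟨sigB acts pat act s.boolVal j, sigN acts pat act aux s.numVal j⟩

lemma sigState_succ {acts : A → Act VB VN} {pat : List A} {act : ℕ → ℕ}
    {aux : ℕ → VN → ℚ} {s : PState VB VN} {j : ℕ} {a : A} (hj : pat[j]? = some a)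
    (hact : act j ≤ 1)
    (haux : ∀ x e, (acts a).effN x = some e → ¬ (acts a).isIncr x e →
      aux j x = ((acts a).resultIf (0 < act j) (sigState acts pat act aux s j)).numVal x) :
    sigState acts pat act aux s (j + 1) =
      (acts a).resultIf (0 < act j) (sigState acts pat act aux s j) := by
  have h01 : act j = 0 ∨ act j = 1 := by omega
  ext1
  · funext v
    rcases hv : (acts a).effB v with _ | _ | _ <;> rcases h01 with h | h <;>
      simp [sigState, sigB, Act.resultIf, Act.result, hj, hv, h]
  · funext x
    rcases hx : (acts a).effN x with _ | e
    · rcases h01 with h | h <;> simp [sigState, sigN, Act.resultIf, Act.result, hj, hx, h]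
    · by_cases hinc : (acts a).isIncr x e
      · rcases h01 with h | h <;> simp [sigState, sigN, Act.resultIf, Act.result, hj, hx, hinc, h,
          e.eval_eq_add_incrPart hinc.1]
      · rw [← haux x e hx hinc]
        simp [sigState, sigN, hj, hx, hinc]

end Step

section Embedding

variable {m p : ℕ} (f : Fin m ↪o Fin p)

open Finset in
noncomputable def countBelow (j : ℕ) : ℕ := #{k | (f k : ℕ) < j}

lemma countBelow_zero : countBelow f 0 = 0 := by
  simp [countBelow]

lemma countBelow_of_le {j : ℕ} (hj : p ≤ j) : countBelow f j = m := by
  simp [countBelow, Finset.filter_true_of_mem fun k _ => (f k).isLt.trans_le hj]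

lemma countBelow_apply (k : Fin m) : countBelow f (f k) = k := by
  rw [countBelow, ← Fin.card_Iio k]
  congr 1
  ext k'
  simp [f.lt_iff_lt]

lemma countBelow_apply_add_one (k : Fin m) : countBelow f (f k + 1) = k + 1 := by
  rw [countBelow, ← Fin.card_Iic k]
  congr 1
  ext k'
  simp [Order.lt_add_one_iff, f.le_iff_le]

lemma countBelow_succ_of_forall_ne {j : ℕ} (h : ∀ k, (f k : ℕ) ≠ j) :
    countBelow f (j + 1) = countBelow f j := by
  unfold countBelow
  congr 1
  ext k
  simp only [Finset.mem_filter, Finset.mem_univ, true_and, Nat.lt_add_one_iff, le_iff_lt_or_eq,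
    h k, or_false]

open Finset in
noncomputable def fiberSum (w : Fin m → ℕ) (j : ℕ) : ℕ := ∑ k with (f k : ℕ) = j, w k

lemma fiberSum_apply (w : Fin m → ℕ) (k : Fin m) : fiberSum f w (f k) = w k := by
  rw [fiberSum, Finset.sum_eq_single_of_mem k (by simp)]
  exact fun k' hk' hne => absurd (f.injective (Fin.ext (Finset.mem_filter.mp hk').2)) hne

lemma fiberSum_of_forall_ne (w : Fin m → ℕ) {j : ℕ} (h : ∀ k, (f k : ℕ) ≠ j) :
    fiberSum f w j = 0 := by
  simp [fiberSum, h]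

lemma fiberSum_le (w : Fin m → ℕ) {c : ℕ} (hw : ∀ k, w k ≤ c) (j : ℕ) : fiberSum f w j ≤ c := by
  by_cases h : ∃ k, (f k : ℕ) = j
  · obtain ⟨k, rfl⟩ := h
    exact (fiberSum_apply f w k).trans_le (hw k)
  · push Not at h
    simp [fiberSum_of_forall_ne f w h]

lemma exists_of_fiberSum_pos (w : Fin m → ℕ) {j : ℕ} (h : 0 < fiberSum f w j) :
    ∃ k, (f k : ℕ) = j ∧ 0 < w k := by
  obtain ⟨k, hk, hw⟩ := Finset.exists_ne_zero_of_sum_ne_zero h.ne'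
  exact ⟨k, (Finset.mem_filter.mp hk).2, Nat.pos_of_ne_zero hw⟩

end Embedding

noncomputable def simAct {A : Type} {pat : List A} (ord : List A)
    (f : Fin ord.length ↪o Fin pat.length) (actb : A → Bool) : ℕ → ℕ :=
  fiberSum f fun k => (actb ord[(k : ℕ)]).toNat

noncomputable def simAux {VB VN A : Type} {pat : List A} (P : Problem VB VN A) (ord : List A)
    (f : Fin ord.length ↪o Fin pat.length) (ν : VN → ℚ) (auxN : A → VN → ℚ) (j : ℕ) : VN → ℚ :=
  chainN P.acts (ord.take (countBelow f (j + 1))) ν auxN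

section Simulation

variable {VB VN A : Type} [Fintype VN] {P : Problem VB VN A} {pat ord : List A}
  {f : Fin ord.length ↪o Fin pat.length} {β : VB → Bool} {ν : VN → ℚ} {actb : A → Bool}
  {auxB : A → VB → Bool} {auxN : A → VN → ℚ} {β' : VB → Bool} {ν' : VN → ℚ}

lemma simAct_le_one (j : ℕ) : simAct ord f actb j ≤ 1 :=
  fiberSum_le f _ (fun _ => Bool.toNat_le _) j

lemma chainState_take_countBelow_succ (hnd : ord.Nodup)
    (hf : ∀ k : Fin ord.length, ord[(k : ℕ)] = pat[(f k : ℕ)])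
    (hT : Tlt P ord β ν actb auxB auxN β' ν') {j : ℕ} (hj : j < pat.length) :
    chainState P.acts (ord.take (countBelow f (j + 1))) ⟨β, ν⟩ auxB auxN =
      (P.acts pat[j]).resultIf (0 < simAct ord f actb j)
        (chainState P.acts (ord.take (countBelow f j)) ⟨β, ν⟩ auxB auxN) := by
  by_cases h : ∃ k, (f k : ℕ) = j
  · obtain ⟨k, rfl⟩ := h
    rw [countBelow_apply_add_one, countBelow_apply, simAct, fiberSum_apply, ← hf k,
      List.take_succ_eq_append_getElem k.isLt, ← before_getElem_eq_take hnd,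
      hT.chainState_before_append]
    cases actb ord[(k : ℕ)] <;> rfl
  · push Not at h
    rw [countBelow_succ_of_forall_ne f h, simAct, fiberSum_of_forall_ne f _ h]
    rfl

lemma simAux_eq_of_sigState_eq (hnd : ord.Nodup)
    (hf : ∀ k : Fin ord.length, ord[(k : ℕ)] = pat[(f k : ℕ)])
    (hT : Tlt P ord β ν actb auxB auxN β' ν') {j : ℕ} (hj : j < pat.length)
    (hS : sigState P.acts pat (simAct ord f actb) (simAux P ord f ν auxN) ⟨β, ν⟩ j =
      chainState P.acts (ord.take (countBelow f j)) ⟨β, ν⟩ auxB auxN) :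
    simAux P ord f ν auxN j = ((P.acts pat[j]).resultIf (0 < simAct ord f actb j)
      (sigState P.acts pat (simAct ord f actb) (simAux P ord f ν auxN) ⟨β, ν⟩ j)).numVal := by
  rw [hS, ← chainState_take_countBelow_succ hnd hf hT hj]
  rfl

lemma sigState_sim_eq_chainState (hnd : ord.Nodup)
    (hf : ∀ k : Fin ord.length, ord[(k : ℕ)] = pat[(f k : ℕ)])
    (hT : Tlt P ord β ν actb auxB auxN β' ν') {j : ℕ} (hj : j ≤ pat.length) :
    sigState P.acts pat (simAct ord f actb) (simAux P ord f ν auxN) ⟨β, ν⟩ j =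
      chainState P.acts (ord.take (countBelow f j)) ⟨β, ν⟩ auxB auxN := by
  induction j with
  | zero => rw [countBelow_zero]; rfl
  | succ j ih =>
    have hj' : j < pat.length := hj
    have hS := ih hj'.le
    rw [sigState_succ (List.getElem?_eq_getElem hj') (simAct_le_one j)
      (fun x _ _ _ => by rw [simAux_eq_of_sigState_eq hnd hf hT hj' hS]),
      hS, chainState_take_countBelow_succ hnd hf hT hj']

lemma sigState_sim_pre (hnd : ord.Nodup)
    (hf : ∀ k : Fin ord.length, ord[(k : ℕ)] = pat[(f k : ℕ)])
    (hT : Tlt P ord β ν actb auxB auxN β' ν') {j : ℕ} (hj : j < pat.length)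
    (hfires : 0 < simAct ord f actb j) :
    (∀ v, PropCond.isFalse v ∈ (P.acts pat[j]).preB →
      sigB P.acts pat (simAct ord f actb) β j v = false) ∧
    (∀ v, PropCond.isTrue v ∈ (P.acts pat[j]).preB →
      sigB P.acts pat (simAct ord f actb) β j v = true) ∧
    (∀ c ∈ (P.acts pat[j]).preN,
      c.op.holds
        (c.expr.eval (sigN P.acts pat (simAct ord f actb) (simAux P ord f ν auxN) ν j))) := by
  obtain ⟨k, rfl, hk⟩ := exists_of_fiberSum_pos f _ hfires
  have hS := sigState_sim_eq_chainState hnd hf hT (f k).isLt.le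
  rw [countBelow_apply, ← before_getElem_eq_take hnd k k.isLt] at hS
  rw [← hf k, show sigB _ _ _ β _ = _ from congrArg PState.boolVal hS,
    show sigN _ _ _ _ ν _ = _ from congrArg PState.numVal hS]
  exact hT.1 _ (by simpa [Nat.pos_iff_ne_zero] using hk)

lemma Tlt.exists_Tpat (hnd : ord.Nodup) (hsub : ord.Sublist pat)
    (hT : Tlt P ord β ν actb auxB auxN β' ν') :
    ∃ act aux, Tpat P pat β ν act aux β' ν' := by
  obtain ⟨f, hf⟩ := List.sublist_iff_exists_fin_orderEmbedding_get_eq.mp hsub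
  simp only [List.get_eq_getElem] at hf
  have hfinal := sigState_sim_eq_chainState hnd hf hT le_rfl
  rw [countBelow_of_le f le_rfl, List.take_length] at hfinal
  refine ⟨simAct ord f actb, simAux P ord f ν auxN, fun j hj => ?_,
    fun v => (hT.2.2.2.1 v).trans (congrFun (congrArg PState.boolVal hfinal) v).symm,
    fun x => (hT.2.2.2.2 x).trans (congrFun (congrArg PState.numVal hfinal) x).symm⟩
  have hpre := sigState_sim_pre hnd hf hT hj
  refine ⟨fun v hv h => (hpre h).1 v hv, fun v hv h => (hpre h).2.1 v hv,
    fun c hc => ⟨fun h => (hpre h).2.2 c hc, fun h => absurd (simAct_le_one j) h.not_ge⟩,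
    fun x e hxe _ => ?_, fun _ => simAct_le_one j⟩
  have haux := congrFun (simAux_eq_of_sigState_eq hnd hf hT hj
    (sigState_sim_eq_chainState hnd hf hT hj.le)) x
  rw [List.get_eq_getElem] at hxe
  exact ⟨fun h => by simpa [Act.resultIf, sigState, h] using haux,
    fun h => by simpa [Act.resultIf, Act.result, sigState, h, hxe] using haux⟩

end Simulation

theorem pattern_dominates_r2e_general
    {VB VN A : Type} [Fintype VN]
    (P : Problem VB VN A) (pat : List A) (ord : List A)
    (hnd : ord.Nodup) (hcompat : ord.Sublist pat)
    (n : ℕ) (h : satLt P ord n) :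
    satPat P pat n := by
  obtain ⟨m, h0, h1, hT, hg⟩ := h
  choose act aux hstep using fun i : Fin n => (hT i).exists_Tpat hnd hcompat
  exact ⟨⟨m.β, m.ν, act, aux⟩, h0, h1, hstep, hg⟩

/-- for every pattern `≺` and total order `<` of the actions compatible
with `≺` (i.e. `<`, seen as a sequence, is obtained from `≺` by removing zero or more
actions, i.e. it is a sublist of `≺`), the pattern `≺`-encoding dominates the R²∃
`<`-encoding: for every bound `n`, if `Π^<_n` is satisfiable then `Π^≺_n` is satisfiable. -/
theorem pattern_dominates_r2e
    {VB VN A : Type} [Fintype VB] [Fintype VN] [Fintype A]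
    (P : Problem VB VN A) (pat : List A) (ord : List A)
    (hnd : ord.Nodup) (hall : ∀ a : A, a ∈ ord) (hcompat : ord.Sublist pat)
    (n : ℕ) (h : satLt P ord n) :
    satPat P pat n :=
  pattern_dominates_r2e_general P pat ord hnd hcompat n h
end PatternPlanning
end

section
/- Let a be an action eligible for rolling, let k ≥ 1, and let s be a state such that the sequence a^k (k consecutive occurrences of a) is executable in s, with final induced state s_k. Then: for every linear increment v += ψ ∈ eff(a), s_k(v) = s(v) + k·s(ψ); for every Boolean assignment v := b ∈ eff(a) with b ∈ {⊤,⊥}, s_k(v) = b; for every simple assignment v := ψ ∈ eff(a), s_k(v) = s(ψ); and for every variable v not assigned by a, s_k(v) = s(v). -/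
open scoped Classical

namespace PatternPlanning

lemma LinExpr.eval_congr {VN : Type} [Fintype VN] (e : LinExpr VN) (nu nu' : VN → ℚ)
    (h : ∀ y, e.coeff y ≠ 0 → nu y = nu' y) : e.eval nu = e.eval nu' := by
  unfold LinExpr.eval
  congr 1
  apply Finset.sum_congr rfl
  intro y _
  by_cases hy : e.coeff y = 0
  · simp [hy]
  · rw [h y hy]

lemma eval_eq_incr {VN : Type} [Fintype VN] (e : LinExpr VN) (x : VN) (nu : VN → ℚ)
    (hx : e.coeff x = 1) : e.eval nu = nu x + (incrPart e x).eval nu := by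
  unfold LinExpr.eval incrPart
  simp only
  have : ∀ w, e.coeff w * nu w =
      Function.update e.coeff x 0 w * nu w + (if w = x then nu x else 0) := by
    intro w
    by_cases hw : w = x
    · subst hw; simp [hx]
    · simp [Function.update_of_ne hw, hw]
  rw [Finset.sum_congr rfl (fun w _ => this w), Finset.sum_add_distrib]
  simp [Finset.sum_ite_eq']
  ring

lemma roll_aux {VB VN : Type} [Fintype VN] (a : Act VB VN)
    (helig : ∀ x e, a.effN x = some e → a.isIncr x e ∨ a.isSimpleA e) :
    ∀ (k : ℕ) (s sk : PState VB VN),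
    execSeq (id : Act VB VN → Act VB VN) (List.replicate k a) s = some sk →
    (∀ x e, a.effN x = some e → a.isIncr x e →
      sk.numVal x = s.numVal x + (k : ℚ) * (incrPart e x).eval s.numVal) ∧
    (∀ v b, a.effB v = some b → sk.boolVal v = if k = 0 then s.boolVal v else b) ∧
    (∀ x e, a.effN x = some e → a.isSimpleA e →
      sk.numVal x = if k = 0 then s.numVal x else e.eval s.numVal) ∧
    (∀ v, ¬ a.assignsB v → sk.boolVal v = s.boolVal v) ∧
    (∀ x, ¬ a.assignsN x → sk.numVal x = s.numVal x) := by
  intro k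
  induction k with
  | zero =>
      intro s sk hexec
      simp only [List.replicate, execSeq, Option.some.injEq] at hexec
      subst hexec
      refine ⟨?_, ?_, ?_, ?_, ?_⟩ <;> intros <;> simp
  | succ k ih =>
      intro s sk hexec
      rw [List.replicate_succ] at hexec
      unfold execSeq at hexec
      split at hexec
      · -- step
        set s' := (id a : Act VB VN).result s with hs'
        have key := ih s' sk hexec
        -- basic facts about s'
        have hunassignedN : ∀ x, ¬ a.assignsN x → s'.numVal x = s.numVal x := by
          intro x hx
          have hnone : a.effN x = none := by
            by_contra h; exact hx h
          simp [hs', Act.result, hnone]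
        have hunassignedB : ∀ v, ¬ a.assignsB v → s'.boolVal v = s.boolVal v := by
          intro v hv
          have hnone : a.effB v = none := by
            by_contra h; exact hv h
          simp [hs', Act.result, hnone]
        have hincrInv : ∀ x e, a.effN x = some e → a.isIncr x e →
            (incrPart e x).eval s'.numVal = (incrPart e x).eval s.numVal := by
          intro x e he hinc
          apply LinExpr.eval_congr
          intro y hy
          apply hunassignedN
          intro hassign
          apply hy
          by_cases hyx : y = x
          · subst hyx; simp [incrPart]
          · simp [incrPart, Function.update_of_ne hyx, hinc.2 y hassign hyx]
        have hsimpInv : ∀ e, a.isSimpleA e → e.eval s'.numVal = e.eval s.numVal := by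
          intro e hsimp
          apply LinExpr.eval_congr
          intro y hy
          apply hunassignedN
          intro hassign
          exact hy (hsimp y hassign)
        refine ⟨?_, ?_, ?_, ?_, ?_⟩
        · intro x e he hinc
          have h1 := key.1 x e he hinc
          have hsx : s'.numVal x = s.numVal x + (incrPart e x).eval s.numVal := by
            have : s'.numVal x = e.eval s.numVal := by
              simp [hs', Act.result, he]
            rw [this, eval_eq_incr e x s.numVal hinc.1]
          rw [h1, hsx, hincrInv x e he hinc]
          push_cast
          ring
        · intro v b hvb
          have h1 := key.2.1 v b hvb
          have hsv : s'.boolVal v = b := by simp [hs', Act.result, hvb]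
          rw [h1]
          simp [hsv]
        · intro x e he hsimp
          have h1 := key.2.2.1 x e he hsimp
          have hsx : s'.numVal x = e.eval s.numVal := by
            simp [hs', Act.result, he]
          rw [h1, hsimpInv e hsimp]
          simp [hsx]
        · intro v hv
          rw [key.2.2.2.1 v hv, hunassignedB v hv]
        · intro x hx
          rw [key.2.2.2.2 x hx, hunassignedN x hx]
      · exact absurd hexec (by simp)

/-- the result of rolling an action `a` eligible for rolling `k ≥ 1`
times from a state `s` in which `a^k` is executable, with final induced state `sk`:
linear increments `v += ψ` give `sk(v) = s(v) + k·s(ψ)`, Boolean assignments `v := b`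
give `sk(v) = b`, simple assignments `v := ψ` give `sk(v) = s(ψ)`, and unassigned
variables are unchanged. -/
theorem rolling_result
    {VB VN : Type} [Fintype VB] [Fintype VN]
    (a : Act VB VN) (ha : a.eligible) (k : ℕ) (hk : 1 ≤ k)
    (s sk : PState VB VN)
    (hexec : execSeq (id : Act VB VN → Act VB VN) (List.replicate k a) s = some sk) :
    (∀ x e, a.effN x = some e → a.isIncr x e →
      sk.numVal x = s.numVal x + (k : ℚ) * (incrPart e x).eval s.numVal) ∧
    (∀ v b, a.effB v = some b → sk.boolVal v = b) ∧
    (∀ x e, a.effN x = some e → a.isSimpleA e → sk.numVal x = e.eval s.numVal) ∧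
    (∀ v, ¬ a.assignsB v → sk.boolVal v = s.boolVal v) ∧
    (∀ x, ¬ a.assignsN x → sk.numVal x = s.numVal x) := by
  have hknz : k ≠ 0 := by omega
  obtain ⟨h1, h2, h3, h4, h5⟩ := roll_aux a ha.2.2.1 k s sk hexec
  refine ⟨h1, ?_, ?_, h4, h5⟩
  · intro v b hvb
    rw [h2 v b hvb]; simp [hknz]
  · intro x e he hs
    rw [h3 x e he hs]; simp [hknz]
end PatternPlanning
end

section
/- For every numeric planning problem Π and every valid plan π for Π, the pattern π-encoding Π^π with bound n = 1 is satisfiable, i.e., Π^π_1 is satisfiable. Consequently, every numeric planning problem that has a valid plan can be solved with bound n = 1 for a suitable pattern. -/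
open scoped Classical

namespace PatternPlanning

section PlanAsPattern

variable {VB VN A : Type} [Fintype VN]

/-- State after executing the first `j` actions of `π` from `s` (ignoring executability). -/
noncomputable def stateAt (acts : A → Act VB VN) (π : List A) (s : PState VB VN) :
    ℕ → PState VB VN
  | 0 => s
  | j + 1 =>
      match π[j]? with
      | none => stateAt acts π s j
      | some a => (acts a).result (stateAt acts π s j)

lemma stateAt_succ_some (acts : A → Act VB VN) (π : List A) (s : PState VB VN)
    {j : ℕ} {a : A} (hg : π[j]? = some a) :
    stateAt acts π s (j + 1) = (acts a).result (stateAt acts π s j) := by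
  simp [stateAt, hg]

lemma stateAt_succ_none (acts : A → Act VB VN) (π : List A) (s : PState VB VN)
    {j : ℕ} (hg : π[j]? = none) :
    stateAt acts π s (j + 1) = stateAt acts π s j := by
  simp [stateAt, hg]

lemma stateAt_shift (acts : A → Act VB VN) (a : A) (rest : List A) (s : PState VB VN) :
    ∀ j, stateAt acts (a :: rest) s (j + 1) = stateAt acts rest ((acts a).result s) j
  | 0 => by simp [stateAt]
  | j + 1 => by
      have ih := stateAt_shift acts a rest s j
      cases h : rest[j]? with
      | none =>
          rw [stateAt_succ_none acts rest _ h,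
            stateAt_succ_none acts (a :: rest) s (by simpa using h), ih]
      | some b =>
          rw [stateAt_succ_some acts rest _ h,
            stateAt_succ_some acts (a :: rest) s
              (show (a :: rest)[j + 1]? = some b by simpa using h), ih]

lemma execSeq_spec (acts : A → Act VB VN) :
    ∀ (π : List A) (s t : PState VB VN), execSeq acts π s = some t →
      t = stateAt acts π s π.length ∧
      ∀ j (hj : j < π.length), (acts (π.get ⟨j, hj⟩)).execIn (stateAt acts π s j)
  | [], s, t, h => by
      simp only [execSeq, Option.some.injEq] at h
      subst h
      exact ⟨rfl, fun j hj => absurd hj (Nat.not_lt_zero j)⟩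
  | a :: rest, s, t, h => by
      simp only [execSeq] at h
      split_ifs at h with hex
      obtain ⟨h1, h2⟩ := execSeq_spec acts rest ((acts a).result s) t h
      refine ⟨?_, ?_⟩
      · rw [List.length_cons, stateAt_shift]; exact h1
      · intro j hj
        cases j with
        | zero => simpa [stateAt] using hex
        | succ j =>
            rw [stateAt_shift]
            exact h2 j (Nat.lt_of_succ_lt_succ hj)

lemma eval_incr (e : LinExpr VN) (x : VN) (h : e.coeff x = 1) (ν : VN → ℚ) :
    ν x + (incrPart e x).eval ν = e.eval ν := by
  unfold incrPart LinExpr.eval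
  have key : ∀ y, Function.update e.coeff x 0 y * ν y
      = Function.update (fun y => e.coeff y * ν y) x 0 y := by
    intro y
    rcases eq_or_ne y x with rfl | hy
    · simp
    · simp [Function.update_of_ne hy]
  rw [Finset.sum_congr rfl fun y _ => key y,
    Finset.sum_update_of_mem (Finset.mem_univ x)]
  have herase := Finset.add_sum_erase Finset.univ (fun y => e.coeff y * ν y)
    (Finset.mem_univ x)
  rw [Finset.sdiff_singleton_eq_erase, ← herase]
  simp only [h, one_mul]
  ring

lemma sig_eq (acts : A → Act VB VN) (π : List A) (s : PState VB VN)
    (aux : ℕ → VN → ℚ)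
    (haux : ∀ j x, aux j x = (stateAt acts π s (j + 1)).numVal x) :
    ∀ j, sigB acts π (fun _ => 1) s.boolVal j = (stateAt acts π s j).boolVal ∧
      sigN acts π (fun _ => 1) aux s.numVal j = (stateAt acts π s j).numVal
  | 0 => ⟨rfl, rfl⟩
  | j + 1 => by
      obtain ⟨ihB, ihN⟩ := sig_eq acts π s aux haux j
      constructor
      · funext v
        simp only [sigB]
        cases hg : π[j]? with
        | none => rw [stateAt_succ_none acts π s hg]; simp [ihB]
        | some a =>
            rw [stateAt_succ_some acts π s hg]
            cases hb : (acts a).effB v with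
            | none => simp [Act.result, hb, ihB]
            | some b => cases b <;> simp [Act.result, hb, ihB]
      · funext x
        simp only [sigN]
        cases hg : π[j]? with
        | none => rw [stateAt_succ_none acts π s hg]; simp [ihN]
        | some a =>
            rw [stateAt_succ_some acts π s hg]
            cases he : (acts a).effN x with
            | none => simp [Act.result, he, ihN]
            | some e =>
                by_cases hi : (acts a).isIncr x e
                · simp only [he, hi, if_pos, ihN, Act.result, Nat.cast_one, one_mul]
                  exact eval_incr e x hi.1 _
                · simp only [he, hi, if_neg, not_false_iff, Act.result, haux,
                    stateAt_succ_some acts π s hg]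

end PlanAsPattern

/-- for every valid plan `π` of `Π`, the pattern `π`-encoding `Π^π` with
bound `n = 1` is satisfiable; consequently, every problem having a valid plan can be
solved with bound `n = 1` for a suitable pattern. -/
theorem plan_as_pattern_bound_one
    {VB VN A : Type} [Fintype VB] [Fintype VN] [Fintype A]
    (P : Problem VB VN A) :
    (∀ π : List A, P.isPlan π → satPat P π 1) ∧
    (P.hasPlan → ∃ pat : List A, satPat P pat 1) := by
  have main : ∀ π : List A, P.isPlan π → satPat P π 1 := by
    intro π hπ
    obtain ⟨t, hexec, hgoal⟩ := hπ
    obtain ⟨ht, hstep⟩ := execSeq_spec P.acts π P.init t hexec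
    have hsig := sig_eq P.acts π P.init
      (fun j x => (stateAt P.acts π P.init (j + 1)).numVal x) (fun _ _ => rfl)
    refine ⟨⟨![P.init.boolVal, t.boolVal], ![P.init.numVal, t.numVal],
      fun _ _ => 1, fun _ j x => (stateAt P.acts π P.init (j + 1)).numVal x⟩,
      rfl, rfl, ?_, ?_⟩
    · intro i
      have hi : i = 0 := Subsingleton.elim i 0
      subst hi
      show Tpat P π P.init.boolVal P.init.numVal (fun _ => 1)
        (fun j x => (stateAt P.acts π P.init (j + 1)).numVal x) t.boolVal t.numVal
      refine ⟨fun j hj => ?_, fun v => ?_, fun x => ?_⟩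
      · have hexecj := hstep j hj
        have hg : π[j]? = some (π.get ⟨j, hj⟩) := by
          simp [List.getElem?_eq_getElem hj]
        refine ⟨?_, ?_, ?_, ?_, fun _ => le_refl 1⟩
        · intro v hv _
          rw [(hsig j).1]
          exact hexecj.1 _ hv
        · intro v hv _
          rw [(hsig j).1]
          exact hexecj.1 _ hv
        · intro c hc
          refine ⟨fun _ => ?_, fun h => absurd h (lt_irrefl 1)⟩
          rw [(hsig j).2]
          exact hexecj.2 c hc
        · intro x e he _
          refine ⟨fun h => absurd h one_ne_zero, fun _ => ?_⟩
          rw [(hsig j).2]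
          simp only [List.get_eq_getElem] at he
          simp [stateAt, hg, Act.result, he]
      · show t.boolVal v = _
        rw [(hsig π.length).1, ht]
      · show t.numVal x = _
        rw [(hsig π.length).2, ht]
    · show P.goalSat t.boolVal t.numVal
      exact hgoal
  exact ⟨main, fun ⟨π, hπ⟩ => ⟨π, main π hπ⟩⟩
end PatternPlanning
end
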